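/- Let G be an undirected graph and let G' be the undirected graph with vertex set {u₁, u₂ : u ∈ V(G)} and edge set {(u₁,v₁) : (u,v) ∈ E(G)} ∪ {(u₁,u₂) : u ∈ V(G)} (each vertex gets one fresh pendant neighbour). Then for every vertex v of G, the normal-play outcome of Edge Geography on (G,v) equals the misère-play outcome of Edge Geography on (G',v₁). -/

import Mathlib

universe u
mutual
  inductive GNormalWin {α : Type u} (moves : α → α → Prop) : α → Prop
    | step {p q : α} : moves p q → GNormalLose moves q → GNormalWin moves p
  inductive GNormalLose {α : Type u} (moves : α → α → Prop) : α → Prop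
    | intro {p : α} : (∀ q, moves p q → GNormalWin moves q) → GNormalLose moves p
end

mutual
  inductive GMisereWin {α : Type u} (moves : α → α → Prop) : α → Prop
    | terminal {p : α} : (∀ q, ¬ moves p q) → GMisereWin moves p
    | step {p q : α} : moves p q → GMisereLose moves q → GMisereWin moves p
  inductive GMisereLose {α : Type u} (moves : α → α → Prop) : α → Prop
    | intro {p q₀ : α} : moves p q₀ → (∀ q, moves p q → GMisereWin moves q) → GMisereLose moves p
end

def nimMove {V : Type u} (adj : V → V → Prop) (p q : V × (V → ℕ)) : Prop :=
  adj p.1 q.1 ∧ q.2 p.1 < p.2 p.1 ∧ ∀ v, v ≠ p.1 → q.2 v = p.2 v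

mutual
  inductive NimRMWin {V : Type u} (adj : V → V → Prop) : V × (V → ℕ) → Prop
    | zero {p} : p.2 p.1 = 0 → NimRMWin adj p
    | step {p q} : nimMove adj p q → NimRMLose adj q → NimRMWin adj p
  inductive NimRMLose {V : Type u} (adj : V → V → Prop) : V × (V → ℕ) → Prop
    | intro {p} : p.2 p.1 ≠ 0 → (∀ q, nimMove adj p q → NimRMWin adj q) → NimRMLose adj p
end

def vgMove {V : Type u} (A : V → V → Prop) (p q : Set V × V) : Prop :=
  A p.2 q.2 ∧ q.2 ∈ p.1 ∧ q.2 ≠ p.2 ∧ q.1 = p.1 \ {p.2}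

def addOut {V : Type u} (A : V → V → Prop) : V ⊕ V → V ⊕ V → Prop
  | .inl a, .inl b => A a b
  | .inl a, .inr b => a = b
  | _, _ => False

def MaxMatching {V : Type u} (G : SimpleGraph V) (M : G.Subgraph) : Prop :=
  M.IsMatching ∧ ∀ N : G.Subgraph, N.IsMatching → N.edgeSet.ncard ≤ M.edgeSet.ncard

def egMoveU {V : Type u} (p q : Set (Sym2 V) × V) : Prop :=
  s(p.2, q.2) ∈ p.1 ∧ q.1 = p.1 \ {s(p.2, q.2)}

def egMoveD {V : Type u} (p q : Set (V × V) × V) : Prop :=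
  (p.2, q.2) ∈ p.1 ∧ q.1 = p.1 \ {(p.2, q.2)}

/-- `G` with a fresh pendant neighbour attached to every vertex. -/
def pendant {V : Type u} (G : SimpleGraph V) : SimpleGraph (V ⊕ V) :=
  SimpleGraph.fromRel (fun x y => match x, y with
    | .inl a, .inl b => G.Adj a b
    | .inl a, .inr b => a = b
    | _, _ => False)

/-! In the misère game on `G'` the player at `u₁` can always step to the leaf `u₂`, which ends
the game and hands the win to the opponent. So a position `u₁` is never terminal, a player who
is stuck in `G` is forced into such a leaf and loses, and otherwise the leaves are irrelevant:
misère play on `G'` from `v₁` mirrors normal play on `G` from `v`. -/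

universe v

structure IsDeadEndExtension {α : Type u} {β : Type v} (m : α → α → Prop) (m' : β → β → Prop)
    (f : α → β) : Prop where
  map_move : ∀ {p q}, m p q → m' (f p) (f q)
  exists_exit : ∀ p, ∃ t, m' (f p) t ∧ ∀ r, ¬ m' t r
  move_cases : ∀ {p t}, m' (f p) t → (∃ q, m p q ∧ t = f q) ∨ ∀ r, ¬ m' t r

namespace IsDeadEndExtension

variable {α : Type u} {β : Type v} {m : α → α → Prop} {m' : β → β → Prop} {f : α → β}

mutual
theorem gMisereWin_of_gNormalWin (h : IsDeadEndExtension m m' f) :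
    ∀ {p}, GNormalWin m p → GMisereWin m' (f p)
  | _, .step hpq hq => .step (h.map_move hpq) (h.gMisereLose_of_gNormalLose hq)

theorem gMisereLose_of_gNormalLose (h : IsDeadEndExtension m m' f) :
    ∀ {p}, GNormalLose m p → GMisereLose m' (f p)
  | p, .intro hwin => by
    obtain ⟨t, hpt, -⟩ := h.exists_exit p
    refine .intro hpt fun t hpt => ?_
    rcases h.move_cases hpt with ⟨q, hpq, rfl⟩ | hdead
    · exact h.gMisereWin_of_gNormalWin (hwin q hpq)
    · exact .terminal hdead
end

mutual
theorem gNormalWin_of_gMisereWin (h : IsDeadEndExtension m m' f) :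
    ∀ {x}, GMisereWin m' x → ∀ p, x = f p → GNormalWin m p
  | _, .terminal hdead, p, hx => by
    obtain ⟨t, hpt, -⟩ := h.exists_exit p
    exact absurd (hx ▸ hpt) (hdead t)
  | _, .step hpt ht, p, hx => by
    rcases h.move_cases (hx ▸ hpt) with ⟨q, hpq, hq⟩ | hdead
    · exact .step hpq (h.gNormalLose_of_gMisereLose ht q hq)
    · obtain ⟨hmove, -⟩ := ht
      exact absurd hmove (hdead _)

theorem gNormalLose_of_gMisereLose (h : IsDeadEndExtension m m' f) :
    ∀ {x}, GMisereLose m' x → ∀ p, x = f p → GNormalLose m p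
  | _, .intro _ hwin, _, hx =>
    .intro fun q hpq => h.gNormalWin_of_gMisereWin (hwin _ (hx ▸ h.map_move hpq)) q rfl
end

theorem gMisereWin_iff (h : IsDeadEndExtension m m' f) (p : α) :
    GMisereWin m' (f p) ↔ GNormalWin m p :=
  ⟨fun hp => h.gNormalWin_of_gMisereWin hp p rfl, h.gMisereWin_of_gNormalWin⟩

end IsDeadEndExtension

section PendantEdges

variable {V : Type u}

def pendantEdges (E : Set (Sym2 V)) : Set (Sym2 (V ⊕ V)) :=
  Sym2.map Sum.inl '' E ∪ Set.range fun u => s(Sum.inl u, Sum.inr u)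

variable {E : Set (Sym2 V)}

@[simp]
theorem map_inl_mem_pendantEdges {z : Sym2 V} :
    Sym2.map Sum.inl z ∈ pendantEdges E ↔ z ∈ E := by
  rw [pendantEdges, Set.mem_union, (Sym2.map.injective Sum.inl_injective).mem_set_image,
    or_iff_left]
  rintro ⟨u, hu⟩
  have h : Sum.inr u ∈ Sym2.map Sum.inl z := hu ▸ Sym2.mem_mk_right _ _
  simp [Sym2.mem_map] at h

theorem mem_pendantEdges_of_inr_mem {e : Sym2 (V ⊕ V)} {b : V} (hb : Sum.inr b ∈ e) :
    e ∈ pendantEdges E ↔ e = s(Sum.inl b, Sum.inr b) := by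
  refine ⟨?_, fun he => Or.inr ⟨b, he.symm⟩⟩
  rintro (⟨z, -, rfl⟩ | ⟨u, rfl⟩)
  · simp [Sym2.mem_map] at hb
  · simp_all

@[simp]
theorem inl_inl_mem_pendantEdges {a b : V} :
    s(Sum.inl a, Sum.inl b) ∈ pendantEdges E ↔ s(a, b) ∈ E :=
  map_inl_mem_pendantEdges (z := s(a, b))

@[simp]
theorem inl_inr_mem_pendantEdges {a b : V} :
    s(Sum.inl a, Sum.inr b) ∈ pendantEdges E ↔ a = b := by
  simp [mem_pendantEdges_of_inr_mem (Sym2.mem_mk_right _ _)]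

@[simp]
theorem inr_inr_notMem_pendantEdges {a b : V} :
    s(Sum.inr a, Sum.inr b) ∉ pendantEdges E := by
  simp [mem_pendantEdges_of_inr_mem (Sym2.mem_mk_right _ _)]

theorem pendantEdges_diff_singleton {a b : V} :
    pendantEdges E \ {s(Sum.inl a, Sum.inl b)} = pendantEdges (E \ {s(a, b)}) := by
  ext e
  induction e using Sym2.ind with
  | _ x y => cases x <;> cases y <;> simp [mem_pendantEdges_of_inr_mem (Sym2.mem_mk_left _ _)]

theorem pendant_edgeSet (G : SimpleGraph V) : (pendant G).edgeSet = pendantEdges G.edgeSet := by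
  ext e
  induction e using Sym2.ind with
  | _ x y =>
    cases x <;> cases y <;>
      simp +contextual [pendant, mem_pendantEdges_of_inr_mem (Sym2.mem_mk_left _ _), G.adj_comm,
        G.ne_of_adj]

theorem not_egMoveU_from_pendant_leaf (u : V) (r : Set (Sym2 (V ⊕ V)) × (V ⊕ V)) :
    ¬ egMoveU (pendantEdges E \ {s(Sum.inl u, Sum.inr u)}, Sum.inr u) r := by
  rintro ⟨⟨hr, hne⟩, -⟩
  exact hne ((mem_pendantEdges_of_inr_mem (Sym2.mem_mk_left _ _)).1 hr)

theorem isDeadEndExtension_pendantEdges :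
    IsDeadEndExtension egMoveU egMoveU
      fun p : Set (Sym2 V) × V => (pendantEdges p.1, Sum.inl p.2) where
  map_move := by
    rintro ⟨E, u⟩ ⟨_, w⟩ ⟨hE, hE'⟩
    dsimp only at hE hE'
    subst hE'
    exact ⟨by simpa using hE, pendantEdges_diff_singleton.symm⟩
  exists_exit := by
    rintro ⟨E, u⟩
    exact ⟨_, ⟨by simp, rfl⟩, not_egMoveU_from_pendant_leaf u⟩
  move_cases := by
    rintro ⟨E, u⟩ ⟨_, x⟩ ⟨hx, hS⟩
    dsimp only at hx hS
    subst hS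
    cases x with
    | inl w =>
      refine .inl ⟨(E \ {s(u, w)}, w), ⟨by simpa using hx, rfl⟩, ?_⟩
      simp [pendantEdges_diff_singleton]
    | inr w =>
      obtain rfl : u = w := by simpa using hx
      exact .inr (not_egMoveU_from_pendant_leaf u)

end PendantEdges

/-- Undirected Edge Geography: the normal outcome of `(G,v)` equals the misère outcome of
`(G',v₁)` where `G'` gives every vertex a fresh pendant neighbour. -/
theorem stmt3 {V : Type} [Fintype V] (G : SimpleGraph V) (v : V) :
    GNormalWin egMoveU (G.edgeSet, v) ↔
      GMisereWin egMoveU ((pendant G).edgeSet, Sum.inl v) := by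
  rw [pendant_edgeSet]
  exact (isDeadEndExtension_pendantEdges.gMisereWin_iff (G.edgeSet, v)).symm
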